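/- Composition of the two main results: under L-smoothness, content sensitivity with parameter β, the position-bias decomposition, and shadow-model mismatch δ, running gradient descent on the shadow model for T ≥ (2L/β²)·(λk₀ + log(p_target/P₀)) iterations yields an iterate x with target-model ranking probability at least p_target·exp(-δ). -/

import Mathlib

/-!
Gradient ascent with step `1/L` on an `L`-smooth function gains at least `‖∇f‖² / (2L)` per
step, hence at least `β² / (2L)` per step while the shadow probability is below `p_target`.
If this lasted for all `T + 1` iterates, the shadow log-probability would climb from `log P₀`
past `log p_target`, so some iterate `τ ≤ T` reaches `p_target`; as `|f_s - f_t| ≤ δ`, the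
target probability there is at least `p_target · exp (-δ)`.
-/

open Real RealInnerProductSpace

section GradientAscent

variable {E : Type*} [NormedAddCommGroup E] [InnerProductSpace ℝ E] [CompleteSpace E]
  {f : E → ℝ} {L : ℝ}

theorem HasGradientAt.hasDerivAt_add_smul {g x v : E} {t : ℝ}
    (hf : HasGradientAt f g (x + t • v)) :
    HasDerivAt (fun s : ℝ => f (x + s • v)) ⟪g, v⟫ t := by
  have hline : HasDerivAt (fun s : ℝ => x + s • v) v t := by
    simpa using ((hasDerivAt_id t).smul_const v).const_add x
  exact hf.hasFDerivAt.comp_hasDerivAt t hline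

theorem add_inner_gradient_sub_le_apply_add (hf : Differentiable ℝ f)
    (hlip : ∀ x y : E, ‖gradient f x - gradient f y‖ ≤ L * ‖x - y‖) (x v : E) :
    f x + ⟪gradient f x, v⟫ - L / 2 * ‖v‖ ^ 2 ≤ f (x + v) := by
  -- `φ` is monotone on `[0, ∞)`: by Cauchy–Schwarz and smoothness its derivative is `≥ 0`.
  set φ : ℝ → ℝ := fun t => f (x + t • v) - t * ⟪gradient f x, v⟫ + L / 2 * t ^ 2 * ‖v‖ ^ 2
  have hφ : ∀ t, HasDerivAt φ
      (⟪gradient f (x + t • v) - gradient f x, v⟫ + L * t * ‖v‖ ^ 2) t := by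
    intro t
    have := (((hf (x + t • v)).hasGradientAt.hasDerivAt_add_smul).sub
      ((hasDerivAt_id t).mul_const ⟪gradient f x, v⟫)).add
      (((hasDerivAt_pow 2 t).const_mul (L / 2)).mul_const (‖v‖ ^ 2))
    refine this.congr_deriv ?_
    rw [inner_sub_left]
    simp only [Nat.cast_ofNat]
    ring
  have hmono : MonotoneOn φ (Set.Ici 0) := by
    refine monotoneOn_of_hasDerivWithinAt_nonneg (convex_Ici 0)
      (fun t _ => (hφ t).continuousAt.continuousWithinAt) (fun t _ => (hφ t).hasDerivWithinAt) ?_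
    rintro t ht
    rw [interior_Ici] at ht
    have hcauchySchwarz := neg_le_of_abs_le (abs_real_inner_le_norm (gradient f (x + t • v) - gradient f x) v)
    have hsmooth : ‖gradient f (x + t • v) - gradient f x‖ ≤ L * t * ‖v‖ := by
      simpa [norm_smul, abs_of_pos (Set.mem_Ioi.1 ht), mul_assoc] using hlip (x + t • v) x
    linarith [mul_le_mul_of_nonneg_right hsmooth (norm_nonneg v)]
  have hφ01 := hmono Set.self_mem_Ici (Set.mem_Ici.2 zero_le_one) zero_le_one
  simp only [φ, zero_smul, one_smul, add_zero, zero_mul, sub_zero, one_mul, one_pow,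
    zero_pow two_ne_zero, mul_zero] at hφ01
  linarith

theorem add_norm_gradient_sq_div_le_apply_add_one_div_smul (hf : Differentiable ℝ f)
    (hlip : ∀ x y : E, ‖gradient f x - gradient f y‖ ≤ L * ‖x - y‖) (x : E) :
    f x + ‖gradient f x‖ ^ 2 / (2 * L) ≤ f (x + (1 / L) • gradient f x) := by
  have h := add_inner_gradient_sub_le_apply_add hf hlip x ((1 / L) • gradient f x)
  rw [real_inner_smul_right, real_inner_self_eq_norm_sq, norm_smul, mul_pow,
    Real.norm_eq_abs, sq_abs] at h
  convert h using 2
  field_simp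
  ring

theorem add_mul_le_apply_of_gradient_ascent (hf : Differentiable ℝ f)
    (hlip : ∀ x y : E, ‖gradient f x - gradient f y‖ ≤ L * ‖x - y‖) (hL : 0 ≤ L)
    {β : ℝ} (hβ : 0 ≤ β) {x : ℕ → E} (hx : ∀ τ, x (τ + 1) = x τ + (1 / L) • gradient f (x τ))
    {n : ℕ} (hgrad : ∀ τ < n, β ≤ ‖gradient f (x τ)‖) :
    f (x 0) + n * (β ^ 2 / (2 * L)) ≤ f (x n) := by
  induction n with
  | zero => simp
  | succ n ih =>
    have hstep : β ^ 2 / (2 * L) ≤ ‖gradient f (x n)‖ ^ 2 / (2 * L) := by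
      gcongr
      exact hgrad n n.lt_succ_self
    have hascent := add_norm_gradient_sq_div_le_apply_add_one_div_smul hf hlip (x n)
    rw [← hx] at hascent
    push_cast
    linarith [ih fun τ hτ => hgrad τ (hτ.trans n.lt_succ_self)]

end GradientAscent

theorem core_main_guarantee_general
    {E : Type*} [NormedAddCommGroup E] [InnerProductSpace ℝ E] [CompleteSpace E]
    (fs ft : E → ℝ) (L β lam c δ ptarget : ℝ) (k₀ : ℕ)
    (hL : 0 < L) (hβ : 0 < β) (hlam : 0 < lam)
    (hdiff : Differentiable ℝ fs)
    (hlip : ∀ x y : E, ‖gradient fs x - gradient fs y‖ ≤ L * ‖x - y‖)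
    (hclose : ∀ x, |fs x - ft x| ≤ δ)
    (x : ℕ → E)
    (hupdate : ∀ τ : ℕ, x (τ + 1) = x τ + (1 / L) • gradient fs (x τ))
    (hsens : ∀ τ : ℕ, Real.exp (fs (x τ) - lam * k₀ + c) < ptarget →
      β ≤ ‖gradient fs (x τ)‖)
    (P₀ : ℝ) (hP₀ : P₀ = Real.exp (fs (x 0) - lam * k₀ + c))
    (T : ℕ)
    (hT : (2 * L / β ^ 2) * (lam * k₀ + Real.log (ptarget / P₀)) ≤ (T : ℝ)) :
    ∃ τ : ℕ, τ ≤ T ∧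
      ptarget * Real.exp (-δ) ≤ Real.exp (ft (x τ) - lam * k₀ + c) := by
  obtain ⟨τ, hτT, hτ⟩ : ∃ τ ≤ T, ptarget ≤ exp (fs (x τ) - lam * k₀ + c) := by
    by_contra! hbelow
    have hgain := add_mul_le_apply_of_gradient_ascent hdiff hlip hL.le hβ.le hupdate
      fun τ hτ => hsens τ (hbelow τ hτ.le)
    have hpt : 0 < ptarget := (exp_pos _).trans (hbelow 0 T.zero_le)
    have hlogT : fs (x T) - lam * k₀ + c < log ptarget := by
      simpa using log_lt_log (exp_pos _) (hbelow T le_rfl)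
    have hTgain : lam * k₀ + log (ptarget / P₀) ≤ T * (β ^ 2 / (2 * L)) := by
      calc lam * k₀ + log (ptarget / P₀)
          = β ^ 2 / (2 * L) * ((2 * L / β ^ 2) * (lam * k₀ + log (ptarget / P₀))) := by
            field_simp
        _ ≤ β ^ 2 / (2 * L) * T := by gcongr
        _ = T * (β ^ 2 / (2 * L)) := mul_comm _ _
    rw [hP₀, log_div hpt.ne' (exp_pos _).ne', log_exp] at hTgain
    have hk₀ : 0 ≤ lam * k₀ := by positivity
    linarith
  refine ⟨τ, hτT, ?_⟩
  have hshadow : fs (x τ) - δ ≤ ft (x τ) := by linarith [(abs_le.mp (hclose (x τ))).2]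
  calc ptarget * exp (-δ) ≤ exp (fs (x τ) - lam * k₀ + c) * exp (-δ) := by gcongr
    _ = exp (fs (x τ) - δ - lam * k₀ + c) := by rw [← exp_add]; ring_nf
    _ ≤ exp (ft (x τ) - lam * k₀ + c) := by gcongr

/-- Main composition: gradient ascent on the shadow model for
T ≥ (2L/β²)(λk₀ + log(p_target/P₀)) iterations yields an iterate whose
target-model ranking probability is at least p_target·exp(-δ). -/
theorem core_main_guarantee
    {E : Type*} [NormedAddCommGroup E] [InnerProductSpace ℝ E] [CompleteSpace E]
    (fs ft : E → ℝ) (L β lam c δ ptarget : ℝ) (k₀ : ℕ)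
    (hL : 0 < L) (hβ : 0 < β) (hlam : 0 < lam) (hδ : 0 ≤ δ)
    (hpt : 0 < ptarget)
    (hdiff : Differentiable ℝ fs)
    (hlip : ∀ x y : E, ‖gradient fs x - gradient fs y‖ ≤ L * ‖x - y‖)
    (hclose : ∀ x, |fs x - ft x| ≤ δ)
    (x : ℕ → E)
    (hupdate : ∀ τ : ℕ, x (τ + 1) = x τ + (1 / L) • gradient fs (x τ))
    (hsens : ∀ τ : ℕ, Real.exp (fs (x τ) - lam * k₀ + c) < ptarget →
      β ≤ ‖gradient fs (x τ)‖)
    (P₀ : ℝ) (hP₀ : P₀ = Real.exp (fs (x 0) - lam * k₀ + c))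
    (T : ℕ)
    (hT : (2 * L / β ^ 2) * (lam * k₀ + Real.log (ptarget / P₀)) ≤ (T : ℝ)) :
    ∃ τ : ℕ, τ ≤ T ∧
      ptarget * Real.exp (-δ) ≤ Real.exp (ft (x τ) - lam * k₀ + c) :=
  core_main_guarantee_general fs ft L β lam c δ ptarget k₀ hL hβ hlam hdiff hlip hclose x hupdate
    hsens P₀ hP₀ T hT
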